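/- arXiv:1303.5390 — 3 statements merged into one kernel-verified Lean document; each statement's English description precedes it below -/
import Mathlib

section
/- Let A : ℝⁿ → Sym(V) be a smooth family of symmetric linear operators on a finite-dimensional inner product space V, and suppose λ₀ is a simple eigenvalue of A(0). Then there is a neighborhood of 0 on which λ₀ extends to a smooth simple eigenvalue function, with a smooth corresponding eigenvector field. -/
open Polynomial Module Filter

noncomputable section
namespace Stmt2Aux

/-- eval of charpoly of a matrix. -/
lemma eval_charpoly_mat {m : Type*} [Fintype m] [DecidableEq m] (M : Matrix m m ℝ) (t : ℝ) :
    M.charpoly.eval t = (Matrix.diagonal (fun _ => t) - M).det := by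
  rw [Matrix.charpoly, ← Polynomial.coe_evalRingHom, RingHom.map_det]
  congr 1
  ext i j
  by_cases h : i = j <;>
    simp [Matrix.charmatrix_apply, Matrix.diagonal_apply, Matrix.map_apply, h]

lemma charpoly_scalar_mat {m : Type*} [Fintype m] [DecidableEq m] (c : ℝ) :
    (Matrix.diagonal (fun _ : m => c)).charpoly = (X - C c) ^ Fintype.card m := by
  have h : (Matrix.diagonal (fun _ : m => c)).charmatrix
      = Matrix.diagonal (fun _ : m => (X - C c : ℝ[X])) := by
    ext i j
    by_cases h : i = j <;>
      simp [Matrix.charmatrix_apply, Matrix.diagonal_apply, Matrix.map_apply, h]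
  rw [Matrix.charpoly, h, Matrix.det_diagonal, Finset.prod_const, Finset.card_univ]

variable {V : Type*} [AddCommGroup V] [Module ℝ V] [FiniteDimensional ℝ V]

lemma eval_charpoly_lin (f : V →ₗ[ℝ] V) (t : ℝ) :
    f.charpoly.eval t = LinearMap.det (t • (1 : V →ₗ[ℝ] V) - f) := by
  classical
  let b := Module.finBasis ℝ V
  rw [← LinearMap.charpoly_toMatrix f b, eval_charpoly_mat, ← LinearMap.det_toMatrix b]
  congr 1
  rw [map_sub, map_smul, LinearMap.toMatrix_one]
  congr 1
  ext i j
  by_cases h : i = j <;> simp [Matrix.diagonal_apply, Matrix.one_apply, h]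

lemma isRoot_charpoly_iff (f : V →ₗ[ℝ] V) (μ : ℝ) :
    f.charpoly.IsRoot μ ↔ ∃ v, v ≠ 0 ∧ f v = μ • v := by
  have h := (LinearMap.hasEigenvalue_zero_tfae (μ • (1 : V →ₗ[ℝ] V) - f)).out 3 5
  rw [IsRoot, eval_charpoly_lin, h]
  constructor
  · rintro ⟨v, hv, he⟩
    refine ⟨v, hv, ?_⟩
    have h2 : μ • v - f v = 0 := by simpa using he
    exact (sub_eq_zero.mp h2).symm
  · rintro ⟨v, hv, he⟩
    refine ⟨v, hv, ?_⟩
    simp [LinearMap.sub_apply, LinearMap.smul_apply, Module.End.one_apply, he]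

lemma rootMultiplicity_eq_one_iff {p : ℝ[X]} (hp : p ≠ 0) (t : ℝ) :
    p.rootMultiplicity t = 1 ↔ p.IsRoot t ∧ ¬ (derivative p).IsRoot t := by
  constructor
  · intro h
    have hr : p.IsRoot t := (rootMultiplicity_pos hp).mp (by omega)
    refine ⟨hr, fun hd => ?_⟩
    have h1 : 1 < p.rootMultiplicity t := by
      apply lt_rootMultiplicity_of_isRoot_iterate_derivative_of_mem_nonZeroDivisors hp
      · intro m hm
        interval_cases m
        · simpa using hr
        · simpa using hd
      · exact mem_nonZeroDivisors_of_ne_zero (by norm_num)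
    omega
  · rintro ⟨h1, h2⟩
    have hpos : 0 < p.rootMultiplicity t := (rootMultiplicity_pos hp).mpr h1
    by_contra hne
    have h2' : ((⇑derivative)^[1] p).IsRoot t :=
      isRoot_iterate_derivative_of_lt_rootMultiplicity (by omega)
    exact h2 (by simpa using h2')

lemma charpoly_eq_mul_of_isCompl (f : V →ₗ[ℝ] V) {p q : Submodule ℝ V} (h : IsCompl p q)
    (hp : ∀ x ∈ p, f x ∈ p) (hq : ∀ x ∈ q, f x ∈ q) :
    f.charpoly = (f.restrict hp).charpoly * (f.restrict hq).charpoly := by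
  let e := Submodule.prodEquivOfIsCompl p q h
  have hψ : (f.restrict hp).prodMap (f.restrict hq) = e.symm.conj f := by
    apply LinearMap.ext
    rintro ⟨a, b⟩
    apply e.injective
    show e ((f.restrict hp) a, (f.restrict hq) b)
        = e (e.symm (f (e.symm.symm (a, b))))
    rw [LinearEquiv.apply_symm_apply, LinearEquiv.symm_symm]
    show (((f.restrict hp) a : V) + ((f.restrict hq) b : V)) = f ((a : V) + (b : V))
    rw [map_add, LinearMap.restrict_coe_apply, LinearMap.restrict_coe_apply]
  rw [← LinearEquiv.charpoly_conj e.symm f, ← hψ, LinearMap.charpoly_prodMap]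

end Stmt2Aux

section Part2
open Polynomial Module
namespace Stmt2Aux

variable {V : Type*} [NormedAddCommGroup V] [InnerProductSpace ℝ V] [FiniteDimensional ℝ V]

lemma eigen_orth_eq_zero (f : V →ₗ[ℝ] V)
    (hsym : ∀ v w : V, (inner ℝ (f v) w : ℝ) = inner ℝ v (f w))
    (lam₀ : ℝ) (hmult : f.charpoly.rootMultiplicity lam₀ = 1)
    {v₀ : V} (hv₀ : v₀ ≠ 0) (hev : f v₀ = lam₀ • v₀) :
    ∀ u : V, f u = lam₀ • u → (inner ℝ v₀ u : ℝ) = 0 → u = 0 := by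
  classical
  set K : Submodule ℝ V := LinearMap.ker (f - lam₀ • 1) with hK
  have hmemK : ∀ {u : V}, u ∈ K ↔ f u = lam₀ • u := by
    intro u
    rw [hK, LinearMap.mem_ker, LinearMap.sub_apply, LinearMap.smul_apply,
      Module.End.one_apply, sub_eq_zero]
  have hp : ∀ x ∈ K, f x ∈ K := by
    intro x hx
    rw [hmemK] at hx ⊢
    rw [hx, map_smul, hx]
  have hq : ∀ x ∈ Kᗮ, f x ∈ Kᗮ := by
    intro y hy
    rw [Submodule.mem_orthogonal] at hy ⊢
    intro u hu
    have h1 : (inner ℝ u (f y) : ℝ) = inner ℝ (f u) y := (hsym u y).symm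
    rw [h1, hmemK.mp hu, real_inner_smul_left, hy u hu, mul_zero]
  have hres : f.restrict hp = lam₀ • (1 : Module.End ℝ K) := by
    ext x
    have : ((f.restrict hp) x : V) = f ↑x := LinearMap.restrict_coe_apply f hp x
    rw [this, hmemK.mp x.2]
    rfl
  have hcharK : (f.restrict hp).charpoly = (X - C lam₀) ^ (finrank ℝ K) := by
    have hb := LinearMap.charpoly_toMatrix (f.restrict hp) (Module.finBasis ℝ K)
    rw [← hb, hres]
    have h2 : (LinearMap.toMatrix (Module.finBasis ℝ K) (Module.finBasis ℝ K))
        (lam₀ • (1 : Module.End ℝ K))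
        = Matrix.diagonal (fun _ => lam₀) := by
      rw [map_smul, LinearMap.toMatrix_one]
      ext i j
      by_cases h : i = j <;> simp [Matrix.diagonal_apply, Matrix.one_apply, h]
    rw [h2, charpoly_scalar_mat, Fintype.card_fin]
  have hcompl : IsCompl K Kᗮ := Submodule.isCompl_orthogonal_of_hasOrthogonalProjection
  have hdvd : (X - C lam₀) ^ (finrank ℝ K) ∣ f.charpoly := by
    rw [charpoly_eq_mul_of_isCompl f hcompl hp hq, hcharK]
    exact dvd_mul_right _ _
  have hle : finrank ℝ K ≤ 1 := by
    have h3 := (le_rootMultiplicity_iff (f.charpoly_monic.ne_zero)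
      (a := lam₀) (n := finrank ℝ K)).mpr hdvd
    omega
  have hv₀K : v₀ ∈ K := hmemK.mpr hev
  have hspan : Submodule.span ℝ {v₀} = K := by
    apply Submodule.eq_of_le_of_finrank_le
    · rw [Submodule.span_le, Set.singleton_subset_iff]
      exact hv₀K
    · rw [finrank_span_singleton hv₀]
      exact hle
  intro u hu hinner
  have huK : u ∈ K := hmemK.mpr hu
  rw [← hspan, Submodule.mem_span_singleton] at huK
  obtain ⟨c, rfl⟩ := huK
  rw [real_inner_smul_right] at hinner
  rcases mul_eq_zero.mp hinner with hc | hc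
  · rw [hc, zero_smul]
  · exact absurd hc (inner_self_ne_zero.mpr hv₀)

end Stmt2Aux
end Part2

section Main
open Polynomial Module Filter Stmt2Aux

/-- If `A` is a smooth family of symmetric operators on a finite-dimensional real
inner product space and `λ₀` is a simple eigenvalue of `A 0`, then near `0` it
extends to a smooth simple eigenvalue function with a smooth eigenvector field. -/
theorem stmt_2 {V : Type*} [NormedAddCommGroup V] [InnerProductSpace ℝ V]
    [FiniteDimensional ℝ V] {n : ℕ}
    (A : EuclideanSpace ℝ (Fin n) → V →L[ℝ] V)
    (hA : ContDiff ℝ (⊤ : ℕ∞) A)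
    (hsym : ∀ x (v w : V), (inner ℝ (A x v) w : ℝ) = inner ℝ v (A x w))
    (lam₀ : ℝ)
    (hsimple : Polynomial.rootMultiplicity lam₀
      (LinearMap.charpoly ((A 0 : V →L[ℝ] V) : V →ₗ[ℝ] V)) = 1) :
    ∃ U ∈ nhds (0 : EuclideanSpace ℝ (Fin n)), ∃ lam : EuclideanSpace ℝ (Fin n) → ℝ,
      ∃ w : EuclideanSpace ℝ (Fin n) → V,
      ContDiffOn ℝ (⊤ : ℕ∞) lam U ∧ ContDiffOn ℝ (⊤ : ℕ∞) w U ∧ lam 0 = lam₀ ∧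
      ∀ x ∈ U, w x ≠ 0 ∧ A x (w x) = lam x • w x ∧
        Polynomial.rootMultiplicity (lam x)
          (LinearMap.charpoly ((A x : V →L[ℝ] V) : V →ₗ[ℝ] V)) = 1 := by
  classical
  -- eigenvector of A 0
  have hne : ∀ x : EuclideanSpace ℝ (Fin n),
      (LinearMap.charpoly ((A x : V →L[ℝ] V) : V →ₗ[ℝ] V)) ≠ 0 :=
    fun x => (LinearMap.charpoly_monic _).ne_zero
  have hroot0 : (LinearMap.charpoly ((A 0 : V →L[ℝ] V) : V →ₗ[ℝ] V)).IsRoot lam₀ :=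
    (rootMultiplicity_pos (hne 0)).mp (by rw [hsimple]; norm_num)
  obtain ⟨v₁, hv₁ne, hv₁⟩ := (isRoot_charpoly_iff _ lam₀).mp hroot0
  set v₀ : V := ‖v₁‖⁻¹ • v₁ with hv₀def
  have hv₀ne : v₀ ≠ 0 :=
    smul_ne_zero (inv_ne_zero (norm_ne_zero_iff.mpr hv₁ne)) hv₁ne
  have hv₀eig : A 0 v₀ = lam₀ • v₀ := by
    rw [hv₀def, map_smul]
    have h : (A 0 : V →L[ℝ] V) v₁ = lam₀ • v₁ := hv₁
    rw [h, smul_comm]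
  have hv₀norm : ‖v₀‖ = 1 := by
    rw [hv₀def, norm_smul, norm_inv, norm_norm,
      inv_mul_cancel₀ (norm_ne_zero_iff.mpr hv₁ne)]
  have hinner1 : (inner ℝ v₀ v₀ : ℝ) = 1 := by
    rw [real_inner_self_eq_norm_sq, hv₀norm]; norm_num
  -- the map Φ and its derivative
  set Φ : (EuclideanSpace ℝ (Fin n)) × ℝ × V → (EuclideanSpace ℝ (Fin n)) × ℝ × V :=
    fun p => (p.1, ((inner ℝ v₀ p.2.2 : ℝ), A p.1 p.2.2 - p.2.1 • p.2.2)) with hΦdef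
  set p₀ : (EuclideanSpace ℝ (Fin n)) × ℝ × V := ((0 : EuclideanSpace ℝ (Fin n)), (lam₀, v₀))
    with hp₀def
  have hΦ : ContDiff ℝ (⊤ : ℕ∞) Φ := by
    refine ContDiff.prodMk contDiff_fst (ContDiff.prodMk ?_ (ContDiff.sub ?_ ?_))
    · exact ContDiff.inner ℝ contDiff_const (contDiff_snd.comp contDiff_snd)
    · exact (hA.comp contDiff_fst).clm_apply (contDiff_snd.comp contDiff_snd)
    · exact (contDiff_fst.comp contDiff_snd).smul (contDiff_snd.comp contDiff_snd)
  set B := fderiv ℝ A 0 with hBdef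
  have hB : HasFDerivAt A B 0 := (hA.differentiable (by simp) 0).hasFDerivAt
  set fst1 : ((EuclideanSpace ℝ (Fin n)) × ℝ × V) →L[ℝ] EuclideanSpace ℝ (Fin n) :=
    ContinuousLinearMap.fst ℝ (EuclideanSpace ℝ (Fin n)) (ℝ × V) with hfst1
  set snd1 : ((EuclideanSpace ℝ (Fin n)) × ℝ × V) →L[ℝ] ℝ × V :=
    ContinuousLinearMap.snd ℝ (EuclideanSpace ℝ (Fin n)) (ℝ × V) with hsnd1
  set prT : ((EuclideanSpace ℝ (Fin n)) × ℝ × V) →L[ℝ] ℝ :=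
    (ContinuousLinearMap.fst ℝ ℝ V).comp snd1 with hprT
  set prV : ((EuclideanSpace ℝ (Fin n)) × ℝ × V) →L[ℝ] V :=
    (ContinuousLinearMap.snd ℝ ℝ V).comp snd1 with hprV
  set D : ((EuclideanSpace ℝ (Fin n)) × ℝ × V) →L[ℝ] ((EuclideanSpace ℝ (Fin n)) × ℝ × V) :=
    fst1.prod
    (((innerSL ℝ v₀).comp prV).prod
      ((((A 0).comp prV) + (B.comp fst1).flip v₀) - (lam₀ • prV + prT.smulRight v₀)))
    with hDdef
  have hD : HasFDerivAt Φ D p₀ := by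
    refine HasFDerivAt.prodMk hasFDerivAt_fst (HasFDerivAt.prodMk ?_ (HasFDerivAt.sub ?_ ?_))
    · exact ((innerSL ℝ v₀).comp prV).hasFDerivAt
    · exact (show HasFDerivAt (A ∘ Prod.fst) (B.comp fst1) p₀ from
        hB.comp p₀ hasFDerivAt_fst).clm_apply prV.hasFDerivAt
    · exact prT.hasFDerivAt.smul (prV.hasFDerivAt (x := p₀))
  have hDeval : ∀ z : (EuclideanSpace ℝ (Fin n)) × ℝ × V, D z =
      (z.1, ((inner ℝ v₀ z.2.2 : ℝ),
        (A 0) z.2.2 + (B z.1) v₀ - (lam₀ • z.2.2 + z.2.1 • v₀))) := fun z => rfl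
  -- bijectivity of D
  have hbij : Function.Bijective D := by
    have hinj : Function.Injective D := by
      rw [injective_iff_map_eq_zero]
      rintro ⟨ξ, μ, u⟩ hz
      rw [hDeval] at hz
      rw [Prod.ext_iff, Prod.ext_iff] at hz
      obtain ⟨hξ, h2, h3⟩ := hz
      simp only [Prod.fst_zero, Prod.snd_zero] at hξ h2 h3
      have hξ0 : ξ = 0 := hξ
      subst hξ0
      rw [map_zero, ContinuousLinearMap.zero_apply, add_zero] at h3
      -- h3 : A 0 u - (lam₀ • u + μ • v₀) = 0
      have h8 : (inner ℝ v₀ ((A 0) u) : ℝ) = 0 := by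
        rw [← hsym 0 v₀ u, hv₀eig, real_inner_smul_left, h2, mul_zero]
      have h7 := congrArg (fun y => (inner ℝ v₀ y : ℝ)) h3
      simp only [inner_sub_right, inner_add_right, real_inner_smul_right, hinner1,
        inner_zero_right, mul_one, h2, mul_zero, h8, zero_sub, zero_add, neg_eq_zero] at h7
      -- h7 : μ = 0
      have h3' : (A 0) u = lam₀ • u := by
        rw [h7, zero_smul, add_zero] at h3
        exact sub_eq_zero.mp h3
      have hu0 : u = 0 :=
        eigen_orth_eq_zero ((A 0 : V →L[ℝ] V) : V →ₗ[ℝ] V) (hsym 0) lam₀ hsimple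
          hv₀ne hv₀eig u h3' h2
      rw [h7, hu0]
      rfl
    have hsurj : Function.Surjective D :=
      (LinearMap.injective_iff_surjective
        (f := (D : ((EuclideanSpace ℝ (Fin n)) × ℝ × V) →ₗ[ℝ] _))).mp hinj
    exact ⟨hinj, hsurj⟩
  -- inverse function theorem
  set eD : ((EuclideanSpace ℝ (Fin n)) × ℝ × V) ≃L[ℝ] ((EuclideanSpace ℝ (Fin n)) × ℝ × V) :=
    (LinearEquiv.ofBijective (D : ((EuclideanSpace ℝ (Fin n)) × ℝ × V) →ₗ[ℝ] _)
      hbij).toContinuousLinearEquiv with heDdef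
  have heD : (eD : ((EuclideanSpace ℝ (Fin n)) × ℝ × V) →L[ℝ] _) = D :=
    ContinuousLinearMap.ext fun z => rfl
  have hDeq : HasFDerivAt Φ
      (eD : ((EuclideanSpace ℝ (Fin n)) × ℝ × V) →L[ℝ] _) p₀ := by
    rw [heD]; exact hD
  have hΦat : ContDiffAt ℝ (⊤ : ℕ∞) Φ p₀ := hΦ.contDiffAt
  set Ψ := hΦat.localInverse hDeq (by simp) with hΨdef
  have hΨat : ContDiffAt ℝ (⊤ : ℕ∞) Ψ (Φ p₀) := hΦat.to_localInverse hDeq (by simp)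
  have hΨp₀ : Ψ (Φ p₀) = p₀ := hΦat.localInverse_apply_image hDeq (by simp)
  have hRinv : ∀ᶠ y in nhds (Φ p₀), Φ (Ψ y) = y :=
    (hΦat.hasStrictFDerivAt' hDeq (by simp)).eventually_right_inverse
  have hΦp₀ : Φ p₀ = ((0 : EuclideanSpace ℝ (Fin n)), ((1 : ℝ), (0 : V))) := by
    show (p₀.1, ((inner ℝ v₀ p₀.2.2 : ℝ), A p₀.1 p₀.2.2 - p₀.2.1 • p₀.2.2)) = _
    rw [hp₀def]
    simp only [hinner1, hv₀eig]
    rw [sub_self]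
  set j : EuclideanSpace ℝ (Fin n) → (EuclideanSpace ℝ (Fin n)) × ℝ × V :=
    fun x => (x, ((1 : ℝ), (0 : V))) with hjdef
  have hj : ContDiff ℝ (⊤ : ℕ∞) j := contDiff_id.prodMk contDiff_const
  have hj0 : j 0 = Φ p₀ := by rw [hΦp₀]
  have hre : ∀ᶠ x in nhds (0 : EuclideanSpace ℝ (Fin n)), Φ (Ψ (j x)) = j x := by
    have ht : Tendsto j (nhds 0) (nhds (Φ p₀)) := by
      rw [← hj0]
      exact hj.continuous.continuousAt
    exact ht.eventually hRinv
  set lam : EuclideanSpace ℝ (Fin n) → ℝ := fun x => (Ψ (j x)).2.1 with hlamdef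
  set w : EuclideanSpace ℝ (Fin n) → V := fun x => (Ψ (j x)).2.2 with hwdef
  have hΨat' : ContDiffAt ℝ (⊤ : ℕ∞) Ψ (j 0) := by rw [hj0]; exact hΨat
  have hΨjat : ContDiffAt ℝ (⊤ : ℕ∞) (fun x => Ψ (j x)) 0 := hΨat'.comp 0 hj.contDiffAt
  have hlamAt : ContDiffAt ℝ (⊤ : ℕ∞) lam 0 :=
    (contDiff_fst.comp contDiff_snd).contDiffAt.comp 0 hΨjat
  have hwAt : ContDiffAt ℝ (⊤ : ℕ∞) w 0 :=
    (contDiff_snd.comp contDiff_snd).contDiffAt.comp 0 hΨjat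
  have hlam0 : lam 0 = lam₀ := by
    rw [hlamdef]
    show (Ψ (j 0)).2.1 = lam₀
    rw [hj0, hΨp₀]
  have hevΨ : ∀ᶠ y in nhds (Φ p₀), ContDiffAt ℝ (⊤ : ℕ∞) Ψ y := by
    set P := hΦat.toOpenPartialHomeomorph Φ hDeq (by simp) with hPdef
    have hT : P.target ∈ nhds (Φ p₀) :=
      P.open_target.mem_nhds (hΦat.image_mem_toOpenPartialHomeomorph_target hDeq (by simp))
    have hinvP : ∀ᶠ p in nhds p₀, ∃ e : ((EuclideanSpace ℝ (Fin n)) × ℝ × V) ≃L[ℝ]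
        ((EuclideanSpace ℝ (Fin n)) × ℝ × V), fderiv ℝ Φ p = e := by
      have ho := ContinuousLinearEquiv.isOpen (𝕜 := ℝ)
        (E := (EuclideanSpace ℝ (Fin n)) × ℝ × V) (F := (EuclideanSpace ℝ (Fin n)) × ℝ × V)
      have hc : ContinuousAt (fderiv ℝ Φ) p₀ := (hΦ.continuous_fderiv (by simp)).continuousAt
      have hmem : fderiv ℝ Φ p₀ ∈ Set.range ((↑) : (((EuclideanSpace ℝ (Fin n)) × ℝ × V) ≃L[ℝ]
          ((EuclideanSpace ℝ (Fin n)) × ℝ × V)) → _ →L[ℝ] _) := ⟨eD, hDeq.fderiv.symm⟩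
      filter_upwards [hc.preimage_mem_nhds (ho.mem_nhds hmem)] with p hp
      obtain ⟨e, he⟩ := hp
      exact ⟨e, he.symm⟩
    have hcont : Tendsto Ψ (nhds (Φ p₀)) (nhds p₀) := by
      have hc := hΨat.continuousAt
      rwa [ContinuousAt, hΨp₀] at hc
    filter_upwards [hT, hcont.eventually hinvP] with y hy hy2
    obtain ⟨e, he⟩ := hy2
    have hd : HasFDerivAt Φ (e : _ →L[ℝ] _) (Ψ y) := by
      rw [← he]; exact (hΦ.differentiable (by simp) _).hasFDerivAt
    exact P.contDiffAt_symm hy hd hΦ.contDiffAt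
  have hev0 : ∀ᶠ x in nhds (0 : EuclideanSpace ℝ (Fin n)),
      ContDiffAt ℝ (⊤ : ℕ∞) (fun x => Ψ (j x)) x := by
    have ht : Tendsto j (nhds 0) (nhds (Φ p₀)) := by
      rw [← hj0]
      exact hj.continuous.continuousAt
    filter_upwards [ht.eventually hevΨ] with x hx
    exact hx.comp x hj.contDiffAt
  obtain ⟨u₁, hu₁, hlamOn⟩ : ∃ u ∈ nhds (0 : EuclideanSpace ℝ (Fin n)),
      ContDiffOn ℝ (⊤ : ℕ∞) lam u :=
    ⟨_, hev0, fun x hx => ((contDiff_fst.comp contDiff_snd).contDiffAt.comp x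
      (show ContDiffAt ℝ (⊤ : ℕ∞) (fun x => Ψ (j x)) x from hx)).contDiffWithinAt⟩
  obtain ⟨u₂, hu₂, hwOn⟩ : ∃ u ∈ nhds (0 : EuclideanSpace ℝ (Fin n)),
      ContDiffOn ℝ (⊤ : ℕ∞) w u :=
    ⟨_, hev0, fun x hx => ((contDiff_snd.comp contDiff_snd).contDiffAt.comp x
      (show ContDiffAt ℝ (⊤ : ℕ∞) (fun x => Ψ (j x)) x from hx)).contDiffWithinAt⟩
  -- multiplicity via Lagrange interpolation of the characteristic polynomial
  set d := finrank ℝ V with hd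
  set b := Module.finBasis ℝ V with hb
  set vnodes : Fin (d + 1) → ℝ := fun i => (i : ℕ) with hvnodes
  have hvinj : Set.InjOn vnodes ↑(Finset.univ : Finset (Fin (d + 1))) := by
    intro i _ j' _ hij
    exact Fin.val_injective (Nat.cast_injective hij)
  have hdeg : ∀ x : EuclideanSpace ℝ (Fin n),
      (LinearMap.charpoly ((A x : V →L[ℝ] V) : V →ₗ[ℝ] V)).degree
        < ((Finset.univ : Finset (Fin (d + 1))).card : ℕ) := by
    intro x
    rw [degree_eq_natDegree (hne x), LinearMap.charpoly_natDegree]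
    rw [Finset.card_univ, Fintype.card_fin]
    exact_mod_cast Nat.lt_succ_self d
  set L : Fin (d + 1) → ℝ[X] := fun i => Lagrange.basis Finset.univ vnodes i with hL
  set G : Fin (d + 1) → EuclideanSpace ℝ (Fin n) → ℝ := fun i x =>
    (Matrix.diagonal (fun _ : Fin d => vnodes i)
      - LinearMap.toMatrix b b ((A x : V →L[ℝ] V) : V →ₗ[ℝ] V)).det with hG
  have hGval : ∀ i x, G i x
      = (LinearMap.charpoly ((A x : V →L[ℝ] V) : V →ₗ[ℝ] V)).eval (vnodes i) := by
    intro i x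
    rw [← LinearMap.charpoly_toMatrix (((A x : V →L[ℝ] V) : V →ₗ[ℝ] V)) b,
      Stmt2Aux.eval_charpoly_mat]
  have hEvalDeriv : ∀ (x : EuclideanSpace ℝ (Fin n)) (t : ℝ),
      (derivative (LinearMap.charpoly ((A x : V →L[ℝ] V) : V →ₗ[ℝ] V))).eval t
        = ∑ i : Fin (d + 1), G i x * (derivative (L i)).eval t := by
    intro x t
    conv_lhs => rw [Lagrange.eq_interpolate hvinj (hdeg x)]
    rw [Lagrange.interpolate_apply, derivative_sum, eval_finset_sum]
    refine Finset.sum_congr rfl fun i _ => ?_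
    rw [derivative_C_mul, eval_mul, eval_C, hGval]
  set h : EuclideanSpace ℝ (Fin n) → ℝ :=
    fun x => ∑ i : Fin (d + 1), G i x * (derivative (L i)).eval (lam x) with hh
  have hcontG : ∀ i, Continuous (G i) := by
    intro i
    apply Continuous.matrix_det
    apply Continuous.sub continuous_const
    exact (LinearMap.continuous_of_finiteDimensional
      ((LinearMap.toMatrix b b).toLinearMap.comp
        (ContinuousLinearMap.coeLM ℝ))).comp hA.continuous
  have hhAt : ContinuousAt h 0 := by
    apply tendsto_finset_sum
    intro i _
    exact ((hcontG i).continuousAt).mul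
      (((derivative (L i)).continuous).continuousAt.comp hlamAt.continuousAt)
  have hh0 : h 0 ≠ 0 := by
    have hrepr : h 0 = (derivative
        (LinearMap.charpoly ((A 0 : V →L[ℝ] V) : V →ₗ[ℝ] V))).eval (lam 0) :=
      (hEvalDeriv 0 (lam 0)).symm
    rw [hrepr, hlam0]
    exact ((Stmt2Aux.rootMultiplicity_eq_one_iff (hne 0) lam₀).mp hsimple).2
  have hU4 : ∀ᶠ x in nhds (0 : EuclideanSpace ℝ (Fin n)), h x ≠ 0 :=
    hhAt.eventually_ne hh0
  -- assemble
  refine ⟨u₁ ∩ u₂ ∩ ({x | Φ (Ψ (j x)) = j x} ∩ {x | h x ≠ 0}),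
    Filter.inter_mem (Filter.inter_mem hu₁ hu₂) (Filter.inter_mem hre hU4),
    lam, w, hlamOn.mono (fun x hx => hx.1.1), hwOn.mono (fun x hx => hx.1.2), hlam0, ?_⟩
  rintro x ⟨⟨-, -⟩, hx3, hx4⟩
  obtain ⟨h5, h6, h7⟩ : (Ψ (j x)).1 = x ∧ (inner ℝ v₀ (w x) : ℝ) = 1 ∧
      A (Ψ (j x)).1 (w x) - lam x • w x = 0 := by
    have hzz : Φ (Ψ (j x)) = j x := hx3
    rw [Prod.ext_iff, Prod.ext_iff] at hzz
    exact ⟨hzz.1, hzz.2.1, hzz.2.2⟩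
  rw [h5] at h7
  have hwx : A x (w x) = lam x • w x := sub_eq_zero.mp h7
  have hwne : w x ≠ 0 := by
    intro h0
    rw [h0, inner_zero_right] at h6
    norm_num at h6
  refine ⟨hwne, hwx, ?_⟩
  rw [Stmt2Aux.rootMultiplicity_eq_one_iff (hne x)]
  constructor
  · exact (Stmt2Aux.isRoot_charpoly_iff _ _).mpr ⟨w x, hwne, hwx⟩
  · intro hcd
    apply hx4
    show h x = 0
    rw [hh]
    show ∑ i : Fin (d + 1), G i x * (derivative (L i)).eval (lam x) = 0
    rw [← hEvalDeriv x (lam x)]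
    exact hcd

end Main
end
end

section
/- (Clairaut's Theorem) If γ is a geodesic on a surface of revolution in Euclidean 3-space, r denotes the distance from the axis, and φ is the angle γ makes with the parallels (circles of latitude), then r·cos φ is constant along γ; consequently γ never enters the region where r < r₀, where r₀ is this constant. -/
open Real RealInnerProductSpace

/-- A point of `ℝ³` with the Euclidean inner product. -/
noncomputable def v3 (a b c : ℝ) : EuclideanSpace ℝ (Fin 3) :=
  (WithLp.equiv 2 (Fin 3 → ℝ)).symm ![a, b, c]

lemma inner_v3 (a b c a' b' c' : ℝ) :
    (inner ℝ (v3 a b c) (v3 a' b' c') : ℝ) = a*a' + b*b' + c*c' := by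
  simp [v3, PiLp.inner_apply, Fin.sum_univ_three]
  ring

lemma hasDerivAt_v3 {a b c : ℝ → ℝ} {a' b' c' t : ℝ}
    (ha : HasDerivAt a a' t) (hb : HasDerivAt b b' t) (hc : HasDerivAt c c' t) :
    HasDerivAt (fun s => v3 (a s) (b s) (c s)) (v3 a' b' c') t := by
  have hpi : HasDerivAt (fun s => ![a s, b s, c s]) ![a', b', c'] t := by
    rw [hasDerivAt_pi]
    intro i
    fin_cases i
    · simpa using ha
    · simpa using hb
    · simpa using hc
  exact ((PiLp.continuousLinearEquiv 2 ℝ (fun _ : Fin 3 => ℝ)).symm.toContinuousLinearMap.hasFDerivAt.comp_hasDerivAt t hpi)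

/-- Clairaut's Theorem: along a unit-speed geodesic `γ` on a surface of
revolution in `ℝ³` (profile `u ↦ (f u, h u)`, `f > 0`, rotated about the
`z`-axis), the quantity `r·cos φ` is constant, where `r = f ∘ u` is the distance
to the axis and `φ` is the angle with the parallels; consequently `γ` never
enters the region `r < r₀`. -/
theorem stmt_10 (f h : ℝ → ℝ) (hf : ContDiff ℝ (⊤ : ℕ∞) f) (hh : ContDiff ℝ (⊤ : ℕ∞) h)
    (hfpos : ∀ x, 0 < f x)
    (harc : ∀ x, (deriv f x) ^ 2 + (deriv h x) ^ 2 = 1)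
    (u θ : ℝ → ℝ) (hu : ContDiff ℝ (⊤ : ℕ∞) u) (hθ : ContDiff ℝ (⊤ : ℕ∞) θ)
    (γ : ℝ → EuclideanSpace ℝ (Fin 3))
    (hγ : ∀ t, γ t = v3 (f (u t) * cos (θ t)) (f (u t) * sin (θ t)) (h (u t)))
    (Xu Xθ : ℝ → EuclideanSpace ℝ (Fin 3))
    (hXu : ∀ t, Xu t =
      v3 (deriv f (u t) * cos (θ t)) (deriv f (u t) * sin (θ t)) (deriv h (u t)))
    (hXθ : ∀ t, Xθ t = v3 (-(f (u t) * sin (θ t))) (f (u t) * cos (θ t)) 0)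
    -- `γ` is a geodesic: its acceleration is orthogonal to the surface
    (hgeo : ∀ t, (inner ℝ (deriv (deriv γ) t) (Xu t) : ℝ) = 0 ∧ (inner ℝ (deriv (deriv γ) t) (Xθ t) : ℝ) = 0)
    -- unit speed
    (hunit : ∀ t, ‖deriv γ t‖ = 1)
    -- `φ t` is the angle `γ` makes with the parallel through `γ t`
    (φ : ℝ → ℝ)
    (hφ : ∀ t, cos (φ t) = (inner ℝ (deriv γ t) (Xθ t) : ℝ) / f (u t)) :
    ∃ r₀ : ℝ, (∀ t, f (u t) * cos (φ t) = r₀) ∧ ∀ t, r₀ ≤ f (u t) := by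
  -- basic differentiability facts
  have hud : Differentiable ℝ u := hu.differentiable (by simp)
  have hθd : Differentiable ℝ θ := hθ.differentiable (by simp)
  have hfd : Differentiable ℝ f := hf.differentiable (by simp)
  have hhd : Differentiable ℝ h := hh.differentiable (by simp)
  have hfd' : Differentiable ℝ (deriv f) :=
    ((contDiff_infty_iff_deriv.mp (hf.of_le (by simp))).2).differentiable (by simp)
  have hhd' : Differentiable ℝ (deriv h) :=
    ((contDiff_infty_iff_deriv.mp (hh.of_le (by simp))).2).differentiable (by simp)
  -- component derivative building blocks
  have hfu : ∀ t, HasDerivAt (fun s => f (u s)) (deriv f (u t) * deriv u t) t := fun t =>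
    (hfd (u t)).hasDerivAt.comp t (hud t).hasDerivAt
  have hhu : ∀ t, HasDerivAt (fun s => h (u s)) (deriv h (u t) * deriv u t) t := fun t =>
    (hhd (u t)).hasDerivAt.comp t (hud t).hasDerivAt
  have hcos : ∀ t, HasDerivAt (fun s => cos (θ s)) (-sin (θ t) * deriv θ t) t := fun t =>
    (hθd t).hasDerivAt.cos
  have hsin : ∀ t, HasDerivAt (fun s => sin (θ s)) (cos (θ t) * deriv θ t) t := fun t =>
    (hθd t).hasDerivAt.sin
  -- explicit first derivative of γ
  set g1 : ℝ → ℝ := fun t => deriv f (u t) * deriv u t * cos (θ t) + f (u t) * (-sin (θ t) * deriv θ t) with hg1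
  set g2 : ℝ → ℝ := fun t => deriv f (u t) * deriv u t * sin (θ t) + f (u t) * (cos (θ t) * deriv θ t) with hg2
  set g3 : ℝ → ℝ := fun t => deriv h (u t) * deriv u t with hg3
  have hdγ : ∀ t, HasDerivAt γ (v3 (g1 t) (g2 t) (g3 t)) t := by
    intro t
    have : HasDerivAt (fun s => v3 (f (u s) * cos (θ s)) (f (u s) * sin (θ s)) (h (u s)))
        (v3 (g1 t) (g2 t) (g3 t)) t :=
      hasDerivAt_v3 ((hfu t).mul (hcos t)) ((hfu t).mul (hsin t)) (hhu t)
    exact this.congr_of_eventuallyEq (Filter.Eventually.of_forall hγ)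
  have hderivγ : deriv γ = fun t => v3 (g1 t) (g2 t) (g3 t) := funext fun t => (hdγ t).deriv
  -- differentiability of the components of deriv γ
  have hud' : Differentiable ℝ (deriv u) :=
    ((contDiff_infty_iff_deriv.mp (hu.of_le (by simp))).2).differentiable (by simp)
  have hθd' : Differentiable ℝ (deriv θ) :=
    ((contDiff_infty_iff_deriv.mp (hθ.of_le (by simp))).2).differentiable (by simp)
  have hg1d : Differentiable ℝ g1 := by rw [hg1]; fun_prop
  have hg2d : Differentiable ℝ g2 := by rw [hg2]; fun_prop
  have hg3d : Differentiable ℝ g3 := by rw [hg3]; fun_prop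
  have hdd : ∀ t, HasDerivAt (deriv γ) (deriv (deriv γ) t) t := by
    intro t
    rw [hderivγ]
    have : DifferentiableAt ℝ (fun t => v3 (g1 t) (g2 t) (g3 t)) t :=
      (hasDerivAt_v3 ((hg1d t).hasDerivAt) ((hg2d t).hasDerivAt) ((hg3d t).hasDerivAt)).differentiableAt
    exact this.hasDerivAt
  -- derivative of Xθ
  set x1' : ℝ → ℝ := fun t => -(deriv f (u t) * deriv u t * sin (θ t) + f (u t) * (cos (θ t) * deriv θ t)) with hx1
  set x2' : ℝ → ℝ := fun t => deriv f (u t) * deriv u t * cos (θ t) + f (u t) * (-sin (θ t) * deriv θ t) with hx2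
  have hdXθ : ∀ t, HasDerivAt Xθ (v3 (x1' t) (x2' t) 0) t := by
    intro t
    have : HasDerivAt (fun s => v3 (-(f (u s) * sin (θ s))) (f (u s) * cos (θ s)) (0:ℝ))
        (v3 (x1' t) (x2' t) 0) t :=
      hasDerivAt_v3 (((hfu t).mul (hsin t)).neg) ((hfu t).mul (hcos t)) (hasDerivAt_const t 0)
    exact this.congr_of_eventuallyEq (Filter.Eventually.of_forall hXθ)
  -- Clairaut quantity
  set G : ℝ → ℝ := fun t => (inner ℝ (deriv γ t) (Xθ t) : ℝ) with hG
  have hGderiv : ∀ t, HasDerivAt G 0 t := by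
    intro t
    have H := (hdd t).inner ℝ (hdXθ t)
    have e1 : (inner ℝ (deriv (deriv γ) t) (Xθ t) : ℝ) = 0 := (hgeo t).2
    have e2 : (inner ℝ (deriv γ t) (v3 (x1' t) (x2' t) 0) : ℝ) = 0 := by
      rw [hderivγ]
      simp only [inner_v3, hx1, hx2, hg1, hg2, hg3]
      ring
    rw [e1, e2, add_zero] at H
    exact H
  have hGconst : ∀ s, G s = G 0 :=
    fun s => is_const_of_deriv_eq_zero (fun t => (hGderiv t).differentiableAt)
      (fun t => (hGderiv t).deriv) s 0
  refine ⟨G 0, ?_, ?_⟩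
  · intro t
    have hne : f (u t) ≠ 0 := (hfpos (u t)).ne'
    rw [hφ t]
    rw [show (inner ℝ (deriv γ t) (Xθ t) : ℝ) = G t from rfl, hGconst t]
    field_simp
  · intro t
    have key : f (u t) * cos (φ t) = G 0 := by
      have hne : f (u t) ≠ 0 := (hfpos (u t)).ne'
      rw [hφ t, show (inner ℝ (deriv γ t) (Xθ t) : ℝ) = G t from rfl, hGconst t]
      field_simp
    calc G 0 = f (u t) * cos (φ t) := key.symm
      _ ≤ f (u t) * 1 := mul_le_mul_of_nonneg_left (cos_le_one _) (hfpos (u t)).le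
      _ = f (u t) := mul_one _
end

section
/- (Riccati Driving Function Comparison) Let f, g be real solutions of f' = -f² - H and g' = -g² - K on intervals starting at 0, where H, K are continuous with H ≥ K, and f(0) = g(0) (finite). Then g exists on at least as large an interval [0,a) as f does, and f ≤ g on that interval. -/
/-!
With `w = exp ∫ f` we have `f = w' / w` and `w'' + H w = 0`. The solution of `g' = -g² - K` is
`g = v' / v` for the solution of `v'' + K v = 0`, `v 0 = 1`, `v' 0 = f 0`; writing `v = w z` and
`p = w² z'` turns this into the linear system `z' = p / w²`, `p' = (H - K) w² z` with `z 0 = 1`,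
`p 0 = 0`. Its coefficients are continuous and nonnegative on `[0,a)`, so its Neumann series
converges on every `[0,b] ⊆ [0,a)` and has nonnegative terms: `z ≥ 1` and `p ≥ 0`. Hence
`g = f + p / (w² z)` is defined on all of `[0,a)` and `g ≥ f`.
-/

open Set Topology MeasureTheory intervalIntegral Nat

section Primitive

variable {a : ℝ}

lemma continuousOn_Ico_of_forall_Icc {X : Type*} [TopologicalSpace X] {g : ℝ → X}
    (h : ∀ b ∈ Ico 0 a, ContinuousOn g (Icc 0 b)) : ContinuousOn g (Ico 0 a) := by
  intro t ht
  have hb : (t + a) / 2 ∈ Ico 0 a := ⟨by linarith [ht.1, ht.2], by linarith [ht.2]⟩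
  have hnhds : Icc 0 ((t + a) / 2) ∈ 𝓝[Ico 0 a] t :=
    mem_nhdsWithin.mpr ⟨Iio _, isOpen_Iio, show t < (t + a) / 2 by linarith [ht.2],
      fun _ hx => ⟨hx.2.1, hx.1.le⟩⟩
  exact (h _ hb t ⟨ht.1, by linarith [ht.2]⟩).mono_of_mem_nhdsWithin hnhds

lemma ContinuousOn.intervalIntegrable_of_Ico {E : Type*} [NormedAddCommGroup E] {g : ℝ → E}
    (hg : ContinuousOn g (Ico 0 a)) {t : ℝ} (ht : t ∈ Ico 0 a) : IntervalIntegrable g volume 0 t :=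
  (hg.mono (Icc_subset_Ico_right ht.2)).intervalIntegrable_of_Icc ht.1

variable {E : Type*} [NormedAddCommGroup E] [NormedSpace ℝ E] {g : ℝ → E}

lemma ContinuousOn.continuousOn_primitive_Ico (hg : ContinuousOn g (Ico 0 a)) :
    ContinuousOn (fun t => ∫ s in (0 : ℝ)..t, g s) (Ico 0 a) :=
  continuousOn_Ico_of_forall_Icc fun b hb => by
    simpa only [uIcc_of_le hb.1] using
      continuousOn_primitive_interval' (hg.intervalIntegrable_of_Ico hb) left_mem_uIcc

lemma ContinuousOn.hasDerivAt_primitive_Ico [CompleteSpace E] (hg : ContinuousOn g (Ico 0 a))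
    {t : ℝ} (ht : t ∈ Ioo 0 a) : HasDerivAt (fun u => ∫ s in (0 : ℝ)..u, g s) (g t) t := by
  have hmem : Ico 0 a ∈ 𝓝 t := Ico_mem_nhds ht.1 ht.2
  exact integral_hasDerivAt_right (hg.intervalIntegrable_of_Ico ⟨ht.1.le, ht.2⟩)
    ⟨_, hmem, hg.aestronglyMeasurable measurableSet_Ico⟩ (hg.continuousAt hmem)

end Primitive

section Neumann

variable {E : Type*} [NormedAddCommGroup E] [NormedSpace ℝ E] {A : ℝ → E →L[ℝ] E} {x₀ : E}
  {a : ℝ}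

noncomputable def neumannTerm (A : ℝ → E →L[ℝ] E) (x₀ : E) : ℕ → ℝ → E
  | 0 => fun _ => x₀
  | n + 1 => fun t => ∫ s in (0 : ℝ)..t, A s (neumannTerm A x₀ n s)

/-- The Neumann series solving `x' = A t x`, `x 0 = x₀`. -/
noncomputable def neumannSum (A : ℝ → E →L[ℝ] E) (x₀ : E) (t : ℝ) : E :=
  ∑' n, neumannTerm A x₀ n t

lemma continuousOn_neumannTerm (hA : ContinuousOn A (Ico 0 a)) (n : ℕ) :
    ContinuousOn (neumannTerm A x₀ n) (Ico 0 a) := by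
  induction n with
  | zero => exact continuousOn_const
  | succ n ih => exact (hA.clm_apply ih).continuousOn_primitive_Ico

lemma norm_neumannTerm_le {M b : ℝ} (hM : ∀ s ∈ Icc 0 b, ‖A s‖ ≤ M) (n : ℕ) {t : ℝ}
    (ht : t ∈ Icc 0 b) : ‖neumannTerm A x₀ n t‖ ≤ ‖x₀‖ * ((M * t) ^ n / n !) := by
  induction n generalizing t with
  | zero => simp [neumannTerm]
  | succ n ih =>
    have hpow : (fun s => M * (‖x₀‖ * ((M * s) ^ n / n !))) =
        fun s => M ^ (n + 1) * ‖x₀‖ / n ! * s ^ n := by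
      funext s; ring
    calc ‖∫ s in (0 : ℝ)..t, A s (neumannTerm A x₀ n s)‖
        ≤ ∫ s in (0 : ℝ)..t, M * (‖x₀‖ * ((M * s) ^ n / n !)) := by
          refine norm_integral_le_of_norm_le ht.1 (ae_of_all _ fun s hs => ?_)
            ((by fun_prop : Continuous _).intervalIntegrable _ _)
          have hs' : s ∈ Icc 0 b := ⟨hs.1.le, hs.2.trans ht.2⟩
          exact (A s).le_of_opNorm_le_of_le (hM s hs') (ih hs')
      _ = ‖x₀‖ * ((M * t) ^ (n + 1) / (n + 1) !) := by
          rw [hpow, intervalIntegral.integral_const_mul, integral_pow, factorial_succ]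
          push_cast
          field_simp
          ring

lemma exists_bound_neumannTerm (hA : ContinuousOn A (Ico 0 a)) {b : ℝ} (hb : b ∈ Ico 0 a) :
    ∃ M, (∀ s ∈ Icc 0 b, ‖A s‖ ≤ M) ∧
      ∀ n, ∀ t ∈ Icc 0 b, ‖neumannTerm A x₀ n t‖ ≤ ‖x₀‖ * ((M * b) ^ n / n !) := by
  obtain ⟨M, hM⟩ :=
    isCompact_Icc.exists_bound_of_continuousOn (hA.mono (Icc_subset_Ico_right hb.2))
  have hM0 : 0 ≤ M := (norm_nonneg _).trans (hM 0 ⟨le_rfl, hb.1⟩)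
  refine ⟨M, hM, fun n t ht => (norm_neumannTerm_le hM n ht).trans ?_⟩
  gcongr
  · exact mul_nonneg hM0 ht.1
  · exact ht.2

lemma neumannSum_zero : neumannSum A x₀ 0 = x₀ :=
  tsum_eq_single 0 fun n hn => by
    obtain ⟨n, rfl⟩ := Nat.exists_eq_succ_of_ne_zero hn
    exact integral_same

variable [CompleteSpace E]

lemma summable_neumannTerm (hA : ContinuousOn A (Ico 0 a)) {t : ℝ} (ht : t ∈ Ico 0 a) :
    Summable (neumannTerm A x₀ · t) := by
  obtain ⟨M, -, hbound⟩ := exists_bound_neumannTerm (x₀ := x₀) hA ht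
  exact .of_norm_bounded ((Real.summable_pow_div_factorial (M * t)).mul_left ‖x₀‖)
    fun n => hbound n t ⟨ht.1, le_rfl⟩

lemma continuousOn_neumannSum (hA : ContinuousOn A (Ico 0 a)) :
    ContinuousOn (neumannSum A x₀) (Ico 0 a) := by
  refine continuousOn_Ico_of_forall_Icc fun b hb => ?_
  obtain ⟨M, -, hbound⟩ := exists_bound_neumannTerm (x₀ := x₀) hA hb
  exact continuousOn_tsum
    (fun n => (continuousOn_neumannTerm hA n).mono (Icc_subset_Ico_right hb.2))
    ((Real.summable_pow_div_factorial (M * b)).mul_left ‖x₀‖) hbound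

lemma neumannSum_eq_add_integral (hA : ContinuousOn A (Ico 0 a)) {t : ℝ} (ht : t ∈ Ico 0 a) :
    neumannSum A x₀ t = x₀ + ∫ s in (0 : ℝ)..t, A s (neumannSum A x₀ s) := by
  obtain ⟨M, hM, hbound⟩ := exists_bound_neumannTerm (x₀ := x₀) hA ht
  have hsub : uIoc 0 t ⊆ Icc 0 t := by rw [uIoc_of_le ht.1]; exact Ioc_subset_Icc_self
  have hsum : HasSum (fun n => ∫ s in (0 : ℝ)..t, A s (neumannTerm A x₀ n s))
      (∫ s in (0 : ℝ)..t, A s (neumannSum A x₀ s)) := by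
    refine hasSum_integral_of_dominated_convergence (fun n _ => M * (‖x₀‖ * ((M * t) ^ n / n !)))
      (fun n => ?_) (fun n => ae_of_all _ fun s hs => ?_) (ae_of_all _ fun _ _ => ?_)
      intervalIntegrable_const (ae_of_all _ fun s hs => ?_)
    · exact ((hA.clm_apply (continuousOn_neumannTerm hA n)).mono
        (hsub.trans (Icc_subset_Ico_right ht.2))).aestronglyMeasurable measurableSet_uIoc
    · exact (A s).le_of_opNorm_le_of_le (hM s (hsub hs)) (hbound n s (hsub hs))
    · exact ((Real.summable_pow_div_factorial (M * t)).mul_left ‖x₀‖).mul_left M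
    · exact (summable_neumannTerm hA (Icc_subset_Ico_right ht.2 (hsub hs))).hasSum.mapL (A s)
  rw [neumannSum, (summable_neumannTerm hA ht).tsum_eq_zero_add]
  exact congrArg (x₀ + ·) hsum.tsum_eq

lemma hasDerivAt_neumannSum (hA : ContinuousOn A (Ico 0 a)) {t : ℝ} (ht : t ∈ Ioo 0 a) :
    HasDerivAt (neumannSum A x₀) (A t (neumannSum A x₀ t)) t := by
  refine (((hA.clm_apply (continuousOn_neumannSum hA)).hasDerivAt_primitive_Ico ht).const_add x₀)
    |>.congr_of_eventuallyEq ?_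
  filter_upwards [Ico_mem_nhds ht.1 ht.2] with s hs using neumannSum_eq_add_integral hA hs

end Neumann

section Nonneg

variable {A : ℝ → ℝ × ℝ →L[ℝ] ℝ × ℝ} {x₀ : ℝ × ℝ} {a : ℝ}

lemma intervalIntegral_prod_nonneg {F : ℝ → ℝ × ℝ} {t : ℝ} (ht : 0 ≤ t)
    (hF : IntervalIntegrable F volume 0 t) (h : ∀ s ∈ Icc 0 t, 0 ≤ F s) :
    0 ≤ ∫ s in (0 : ℝ)..t, F s := by
  refine Prod.le_def.mpr ⟨?_, ?_⟩
  · rw [Prod.fst_zero]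
    change 0 ≤ ContinuousLinearMap.fst ℝ ℝ ℝ (∫ s in (0 : ℝ)..t, F s)
    rw [← (ContinuousLinearMap.fst ℝ ℝ ℝ).intervalIntegral_comp_comm hF]
    exact integral_nonneg ht fun s hs => (h s hs).1
  · rw [Prod.snd_zero]
    change 0 ≤ ContinuousLinearMap.snd ℝ ℝ ℝ (∫ s in (0 : ℝ)..t, F s)
    rw [← (ContinuousLinearMap.snd ℝ ℝ ℝ).intervalIntegral_comp_comm hF]
    exact integral_nonneg ht fun s hs => (h s hs).2

lemma neumannTerm_nonneg (hA : ContinuousOn A (Ico 0 a))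
    (hpos : ∀ s ∈ Ico 0 a, ∀ y, 0 ≤ y → 0 ≤ A s y) (hx₀ : 0 ≤ x₀) (n : ℕ) :
    ∀ t ∈ Ico 0 a, 0 ≤ neumannTerm A x₀ n t := by
  induction n with
  | zero => exact fun _ _ => hx₀
  | succ n ih =>
    intro t ht
    refine intervalIntegral_prod_nonneg ht.1
      ((hA.clm_apply (continuousOn_neumannTerm hA n)).intervalIntegrable_of_Ico ht) fun s hs => ?_
    have hs' : s ∈ Ico 0 a := Icc_subset_Ico_right ht.2 hs
    exact hpos s hs' _ (ih s hs')

lemma le_neumannSum (hA : ContinuousOn A (Ico 0 a))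
    (hpos : ∀ s ∈ Ico 0 a, ∀ y, 0 ≤ y → 0 ≤ A s y) (hx₀ : 0 ≤ x₀) {t : ℝ} (ht : t ∈ Ico 0 a) :
    x₀ ≤ neumannSum A x₀ t :=
  (summable_neumannTerm hA ht).le_tsum 0 fun n _ => neumannTerm_nonneg hA hpos hx₀ n t ht

end Nonneg

section Riccati

noncomputable def antidiagonalSystem (r c : ℝ → ℝ) (t : ℝ) : ℝ × ℝ →L[ℝ] ℝ × ℝ :=
  r t • (ContinuousLinearMap.inl ℝ ℝ ℝ ∘L ContinuousLinearMap.snd ℝ ℝ ℝ) +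
    c t • (ContinuousLinearMap.inr ℝ ℝ ℝ ∘L ContinuousLinearMap.fst ℝ ℝ ℝ)

variable {r c : ℝ → ℝ}

@[simp]
lemma antidiagonalSystem_apply (t : ℝ) (y : ℝ × ℝ) :
    antidiagonalSystem r c t y = (r t * y.2, c t * y.1) := by
  simp [antidiagonalSystem]

lemma ContinuousOn.antidiagonalSystem {s : Set ℝ} (hr : ContinuousOn r s)
    (hc : ContinuousOn c s) : ContinuousOn (antidiagonalSystem r c) s :=
  (hr.smul continuousOn_const).add (hc.smul continuousOn_const)

lemma antidiagonalSystem_nonneg {t : ℝ} (hr : 0 ≤ r t) (hc : 0 ≤ c t) {y : ℝ × ℝ} (hy : 0 ≤ y) :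
    0 ≤ antidiagonalSystem r c t y := by
  rw [antidiagonalSystem_apply]
  exact ⟨mul_nonneg hr hy.2, mul_nonneg hc hy.1⟩

lemma hasDerivAt_add_div_riccati {f w z p : ℝ → ℝ} {H K t : ℝ}
    (hf : HasDerivAt f (-f t ^ 2 - H) t) (hw : HasDerivAt w (f t * w t) t)
    (hz : HasDerivAt z ((w t ^ 2)⁻¹ * p t) t) (hp : HasDerivAt p ((H - K) * w t ^ 2 * z t) t)
    (hw0 : w t ≠ 0) (hz0 : z t ≠ 0) :
    HasDerivAt (fun s => f s + p s / (w s ^ 2 * z s))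
      (-(f t + p t / (w t ^ 2 * z t)) ^ 2 - K) t := by
  have hwz : HasDerivAt (fun s => w s ^ 2 * z s) _ t := (hw.pow 2).mul hz
  refine (hf.add (hp.div hwz (mul_ne_zero (pow_ne_zero 2 hw0) hz0))).congr_deriv ?_
  simp only [Pi.pow_apply]
  field_simp
  ring

end Riccati

theorem stmt_18_general (a : ℝ) (H K f : ℝ → ℝ)
    (hH : ContinuousOn H (Set.Ico 0 a)) (hK : ContinuousOn K (Set.Ico 0 a))
    (hHK : ∀ t ∈ Set.Ico (0 : ℝ) a, K t ≤ H t)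
    (hfc : ContinuousOn f (Set.Ico 0 a))
    (hf : ∀ t ∈ Set.Ioo (0 : ℝ) a, HasDerivAt f (-(f t) ^ 2 - H t) t) :
    ∃ g : ℝ → ℝ, g 0 = f 0 ∧ ContinuousOn g (Set.Ico 0 a) ∧
      (∀ t ∈ Set.Ioo (0 : ℝ) a, HasDerivAt g (-(g t) ^ 2 - K t) t) ∧
      ∀ t ∈ Set.Ico (0 : ℝ) a, f t ≤ g t := by
  set w : ℝ → ℝ := fun t => Real.exp (∫ s in (0 : ℝ)..t, f s)
  have hwpos : ∀ t, 0 < w t := fun t => Real.exp_pos _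
  have hwc : ContinuousOn w (Ico 0 a) :=
    Real.continuous_exp.comp_continuousOn hfc.continuousOn_primitive_Ico
  have hw : ∀ t ∈ Ioo 0 a, HasDerivAt w (f t * w t) t := fun t ht => by
    simpa only [mul_comm] using (hfc.hasDerivAt_primitive_Ico ht).exp
  set A := antidiagonalSystem (fun t => (w t ^ 2)⁻¹) (fun t => (H t - K t) * w t ^ 2)
  have hA : ContinuousOn A (Ico 0 a) :=
    ((hwc.pow 2).inv₀ fun t _ => (pow_pos (hwpos t) 2).ne').antidiagonalSystem
      ((hH.sub hK).mul (hwc.pow 2))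
  set x := neumannSum A (1, 0)
  have hx : ContinuousOn x (Ico 0 a) := continuousOn_neumannSum hA
  have hApos : ∀ s ∈ Ico 0 a, ∀ y, 0 ≤ y → 0 ≤ A s y := fun s hs _ hy =>
    antidiagonalSystem_nonneg (by positivity)
      (mul_nonneg (sub_nonneg.mpr (hHK s hs)) (by positivity)) hy
  have hx₀ : ∀ t ∈ Ico 0 a, ((1, 0) : ℝ × ℝ) ≤ x t := fun t ht =>
    le_neumannSum (x₀ := (1, 0)) hA hApos (Prod.le_def.mpr ⟨zero_le_one, le_rfl⟩) ht
  have hz : ∀ t ∈ Ico 0 a, 0 < (x t).1 := fun t ht => one_pos.trans_le (hx₀ t ht).1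
  refine ⟨fun t => f t + (x t).2 / (w t ^ 2 * (x t).1), ?_, ?_, ?_, ?_⟩
  · simp [x, neumannSum_zero]
  · exact hfc.add (hx.snd.div ((hwc.pow 2).mul hx.fst) fun t ht => by have := hz t ht; positivity)
  · intro t ht
    have hxt := hasDerivAt_neumannSum (x₀ := ((1, 0) : ℝ × ℝ)) hA ht
    have hfst := (ContinuousLinearMap.fst ℝ ℝ ℝ).hasFDerivAt.comp_hasDerivAt t hxt
    have hsnd := (ContinuousLinearMap.snd ℝ ℝ ℝ).hasFDerivAt.comp_hasDerivAt t hxt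
    simp only [A, antidiagonalSystem_apply] at hfst hsnd
    exact hasDerivAt_add_div_riccati (hf t ht) (hw t ht) hfst hsnd (by positivity)
      (hz t ⟨ht.1.le, ht.2⟩).ne'
  · exact fun t ht => le_add_of_nonneg_right
      (div_nonneg ((hx₀ t ht).2) (mul_nonneg (by positivity) (hz t ht).le))

/-- Riccati driving function comparison: if `f' = -f² - H` on `[0,a)`,
`H ≥ K` with `H, K` continuous, then the solution `g` of `g' = -g² - K` with
`g 0 = f 0` exists on at least the interval `[0,a)`, and `f ≤ g` there. -/
theorem stmt_18 (a : ℝ) (ha : 0 < a) (H K f : ℝ → ℝ)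
    (hH : ContinuousOn H (Set.Ico 0 a)) (hK : ContinuousOn K (Set.Ico 0 a))
    (hHK : ∀ t ∈ Set.Ico (0 : ℝ) a, K t ≤ H t)
    (hfc : ContinuousOn f (Set.Ico 0 a))
    (hf : ∀ t ∈ Set.Ioo (0 : ℝ) a, HasDerivAt f (-(f t) ^ 2 - H t) t) :
    ∃ g : ℝ → ℝ, g 0 = f 0 ∧ ContinuousOn g (Set.Ico 0 a) ∧
      (∀ t ∈ Set.Ioo (0 : ℝ) a, HasDerivAt g (-(g t) ^ 2 - K t) t) ∧
      ∀ t ∈ Set.Ico (0 : ℝ) a, f t ≤ g t :=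
  stmt_18_general a H K f hH hK hHK hfc hf
end
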